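/- arXiv:1912.08626 — 3 statements merged into one kernel-verified Lean document; each statement's English description precedes it below -/
import Mathlib

section
/- Let (a_n)_{n≥0} be a sequence of complex numbers that is ultimately periodic with period q ≥ 1, say a_{n+q} = a_n for all n ≥ K. Suppose that for every rational α ∈ (0,1), sup_{0≤r<1} |∑_{n=0}^{∞} a_n r^n e^{2πi n α}| < ∞. Then a_{K+j} = a_{K+j'} for all 0 ≤ j, j' ≤ q−1; i.e., the sequence is ultimately constant. -/
/-!
For `|z| < 1` the periodicity gives `(1 - z ^ q) ∑ aₙ zⁿ = G z` with `G` a polynomial, and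
`G ζ = ζ ^ K P ζ` at every `q`-th root of unity `ζ`, where `P z = ∑_{j < q} a_{K+j} z ^ j`.
If `ζ ≠ 1`, the power series stays bounded along the radius towards `ζ` while `1 - r ^ q → 0`,
so `G ζ = 0` and hence `P ζ = 0`. A polynomial of degree `< q` vanishing at all nontrivial
`q`-th roots of unity has all coefficients equal to `P 1 / q`, by discrete Fourier inversion.
-/

noncomputable def e (x : ℝ) : ℂ := Complex.exp (2 * Real.pi * Complex.I * x)

open Complex Finset Filter Topology

section EventuallyPeriodic

variable {α : Type*} {a : ℕ → α} {K q : ℕ}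

theorem exists_lt_eq_of_periodic_from (hq : 0 < q) (hper : ∀ n, K ≤ n → a (n + q) = a n)
    (n : ℕ) : ∃ m < K + q, a m = a n := by
  induction n using Nat.strong_induction_on with
  | _ n ih =>
    by_cases hn : n < K + q
    · exact ⟨n, hn, rfl⟩
    · obtain ⟨m, hm, hmn⟩ := ih (n - q) (by omega)
      refine ⟨m, hm, ?_⟩
      rw [hmn, ← hper _ (by omega), Nat.sub_add_cancel (by omega)]

theorem finite_range_of_periodic_from (hq : 0 < q) (hper : ∀ n, K ≤ n → a (n + q) = a n) :
    (Set.range a).Finite :=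
  ((Set.finite_Iio (K + q)).image a).subset <| by
    rintro _ ⟨n, rfl⟩
    exact exists_lt_eq_of_periodic_from hq hper n

theorem bddAbove_norm_of_periodic_from {E : Type*} [Norm E] {a : ℕ → E} {K q : ℕ} (hq : 0 < q)
    (hper : ∀ n, K ≤ n → a (n + q) = a n) : BddAbove (Set.range fun n ↦ ‖a n‖) := by
  rw [show (fun n ↦ ‖a n‖) = norm ∘ a from rfl, Set.range_comp]
  exact ((finite_range_of_periodic_from hq hper).image norm).bddAbove

end EventuallyPeriodic

section PowerSeries

variable {𝕜 : Type*} [NormedField 𝕜]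

theorem summable_mul_pow_of_bddAbove_norm [CompleteSpace 𝕜] {a : ℕ → 𝕜}
    (ha : BddAbove (Set.range fun n ↦ ‖a n‖)) {z : 𝕜} (hz : ‖z‖ < 1) :
    Summable fun n ↦ a n * z ^ n := by
  obtain ⟨C, hC⟩ := ha
  refine .of_norm_bounded ((summable_geometric_of_lt_one (norm_nonneg z) hz).mul_left C)
    fun n ↦ ?_
  rw [norm_mul, norm_pow]
  exact mul_le_mul_of_nonneg_right (hC ⟨n, rfl⟩) (by positivity)

theorem one_sub_pow_mul_tsum_of_periodic_from {a : ℕ → 𝕜} {K q : ℕ}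
    (hper : ∀ n, K ≤ n → a (n + q) = a n) {z : 𝕜} (hs : Summable fun n ↦ a n * z ^ n) :
    (1 - z ^ q) * ∑' n, a n * z ^ n =
      ∑ n ∈ range (K + q), a n * z ^ n - ∑ n ∈ range K, a n * z ^ (n + q) := by
  have hs' : Summable fun n ↦ a n * z ^ (n + q) :=
    (hs.mul_right (z ^ q)).congr fun n ↦ by ring
  have hshift : z ^ q * ∑' n, a n * z ^ n = ∑' n, a n * z ^ (n + q) := by
    rw [← tsum_mul_left]
    exact tsum_congr fun n ↦ by ring
  have htails : ∑' n, a (n + (K + q)) * z ^ (n + (K + q)) =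
      ∑' n, a (n + K) * z ^ (n + K + q) :=
    tsum_congr fun n ↦ by rw [← add_assoc, hper (n + K) (by omega)]
  rw [sub_mul, one_mul, hshift, ← hs.sum_add_tsum_nat_add (K + q),
    ← hs'.sum_add_tsum_nat_add K, htails]
  ring

end PowerSeries

theorem sum_range_add_sub_sum_range_of_pow_eq_one {R : Type*} [CommRing R] (a : ℕ → R) (K : ℕ)
    {q : ℕ} {z : R} (hz : z ^ q = 1) :
    ∑ n ∈ range (K + q), a n * z ^ n - ∑ n ∈ range K, a n * z ^ (n + q) =
      z ^ K * ∑ j ∈ range q, a (K + j) * z ^ j := by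
  simp only [pow_add, hz, mul_one, sum_range_add, add_sub_cancel_left, mul_sum]
  exact sum_congr rfl fun j _ ↦ by ring

theorem sum_range_mul_pow_eq_zero_of_bounded_radial {a : ℕ → ℂ} {K q : ℕ} (hq : 0 < q)
    (hper : ∀ n, K ≤ n → a (n + q) = a n) {ζ : ℂ} (hζ : ζ ^ q = 1) {M : ℝ}
    (hM : ∀ r : ℝ, 0 ≤ r → r < 1 → ‖∑' n, a n * (r * ζ) ^ n‖ ≤ M) :
    ∑ j ∈ range q, a (K + j) * ζ ^ j = 0 := by
  set G : ℂ → ℂ := fun z ↦ ∑ n ∈ range (K + q), a n * z ^ n - ∑ n ∈ range K, a n * z ^ (n + q)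
  have hζ_norm : ‖ζ‖ = 1 := norm_eq_one_of_pow_eq_one hζ hq.ne'
  have hG : ∀ r : ℝ, 0 ≤ r → r < 1 → G (r * ζ) = (1 - (r : ℂ) ^ q) * ∑' n, a n * (r * ζ) ^ n := by
    intro r hr0 hr1
    have hz : ‖(r : ℂ) * ζ‖ < 1 := by simpa [hζ_norm, abs_of_nonneg hr0] using hr1
    rw [show (r : ℂ) ^ q = (r * ζ) ^ q by rw [mul_pow, hζ, mul_one]]
    exact (one_sub_pow_mul_tsum_of_periodic_from hper
      (summable_mul_pow_of_bddAbove_norm (bddAbove_norm_of_periodic_from hq hper) hz)).symm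
  have hIoo : Set.Ioo (0 : ℝ) 1 ∈ 𝓝[<] 1 := Ioo_mem_nhdsLT zero_lt_one
  have hlim_zero : Tendsto (fun r : ℝ ↦ G (r * ζ)) (𝓝[<] 1) (𝓝 0) := by
    have hfactor : Tendsto (fun r : ℝ ↦ 1 - (r : ℂ) ^ q) (𝓝[<] 1) (𝓝 0) :=
      (Continuous.tendsto' (by fun_prop) 1 0 (by simp)).mono_left nhdsWithin_le_nhds
    have hbounded : IsBoundedUnder (· ≤ ·) (𝓝[<] 1)
        fun r : ℝ ↦ ‖∑' n, a n * (r * ζ) ^ n‖ :=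
      isBoundedUnder_of_eventually_le (a := M) <| by
        filter_upwards [hIoo] with r hr using hM r hr.1.le hr.2
    refine (hfactor.zero_mul_isBoundedUnder_le hbounded).congr' ?_
    filter_upwards [hIoo] with r hr using (hG r hr.1.le hr.2).symm
  have hlim : Tendsto (fun r : ℝ ↦ G (r * ζ)) (𝓝[<] 1) (𝓝 (G ζ)) :=
    (Continuous.tendsto' (by fun_prop) 1 (G ζ) (by simp)).mono_left nhdsWithin_le_nhds
  have hGζ := tendsto_nhds_unique hlim hlim_zero
  rw [show G ζ = _ from sum_range_add_sub_sum_range_of_pow_eq_one a K hζ] at hGζ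
  have hζ_ne : ζ ≠ 0 := norm_ne_zero_iff.mp (by simp [hζ_norm])
  exact (mul_eq_zero.mp hGζ).resolve_left (pow_ne_zero K hζ_ne)

section RootsOfUnity

variable {R : Type*} [CommRing R] [IsDomain R]

theorem geom_sum_eq_zero_of_pow_eq_one {w : R} {n : ℕ} (hw : w ^ n = 1) (hw1 : w ≠ 1) :
    ∑ i ∈ range n, w ^ i = 0 :=
  eq_zero_of_ne_zero_of_mul_left_eq_zero (sub_ne_zero_of_ne hw1.symm)
    (by rw [mul_neg_geom_sum, hw, sub_self])

theorem IsPrimitiveRoot.natCast_mul_eq_sum_of_sum_mul_pow_eq_zero {ζ : R} {q : ℕ}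
    (hζ : IsPrimitiveRoot ζ q) {c : ℕ → R}
    (hc : ∀ m, 0 < m → m < q → ∑ t ∈ range q, c t * (ζ ^ m) ^ t = 0) {j : ℕ} (hj : j < q) :
    (q : R) * c j = ∑ t ∈ range q, c t := by
  have horth : ∀ t ∈ range q, t ≠ j → ∑ m ∈ range q, (ζ ^ (t + q - j)) ^ m = 0 := by
    intro t ht htj
    refine geom_sum_eq_zero_of_pow_eq_one (by rw [pow_right_comm, hζ.pow_eq_one, one_pow])
      fun h ↦ htj ?_
    have := Nat.eq_of_dvd_of_lt_two_mul (by omega) ((hζ.pow_eq_one_iff_dvd _).mp h)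
      (by simp at ht; omega)
    omega
  calc (q : R) * c j = ∑ t ∈ range q, c t * ∑ m ∈ range q, (ζ ^ (t + q - j)) ^ m := by
        rw [sum_eq_single_of_mem j (mem_range.mpr hj) fun t ht htj ↦ by rw [horth t ht htj,
          mul_zero], Nat.add_sub_cancel_left, hζ.pow_eq_one]
        simp [mul_comm]
    _ = ∑ m ∈ range q, (ζ ^ m) ^ (q - j) * ∑ t ∈ range q, c t * (ζ ^ m) ^ t := by
        simp only [mul_sum]
        rw [sum_comm]
        refine sum_congr rfl fun m _ ↦ sum_congr rfl fun t _ ↦ ?_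
        rw [← pow_mul, ← pow_mul, ← pow_mul, Nat.add_sub_assoc hj.le]
        ring
    _ = ∑ t ∈ range q, c t := by
        rw [sum_eq_single_of_mem 0 (mem_range.mpr (by omega)) fun m hm hm0 ↦ by
          rw [hc m (by omega) (mem_range.mp hm), mul_zero]]
        simp

theorem IsPrimitiveRoot.eq_of_sum_mul_pow_eq_zero {ζ : R} {q : ℕ} (hζ : IsPrimitiveRoot ζ q)
    {c : ℕ → R} (hc : ∀ m, 0 < m → m < q → ∑ t ∈ range q, c t * (ζ ^ m) ^ t = 0) {j j' : ℕ}
    (hj : j < q) (hj' : j' < q) : c j = c j' := by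
  have : NeZero q := ⟨by omega⟩
  refine mul_left_cancel₀ hζ.neZero'.out ?_
  rw [hζ.natCast_mul_eq_sum_of_sum_mul_pow_eq_zero hc hj,
    hζ.natCast_mul_eq_sum_of_sum_mul_pow_eq_zero hc hj']

end RootsOfUnity

theorem e_natCast_mul (n : ℕ) (x : ℝ) : e (n * x) = e x ^ n := by
  rw [e, e, ← Complex.exp_nat_mul]
  congr 1
  push_cast
  ring

theorem isPrimitiveRoot_e_inv {q : ℕ} (hq : q ≠ 0) : IsPrimitiveRoot (e (q : ℝ)⁻¹) q := by
  convert Complex.isPrimitiveRoot_exp q hq using 1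
  rw [e, div_eq_mul_inv]
  push_cast
  rfl

theorem stmt_6 (a : ℕ → ℂ) (q K : ℕ) (hq : 1 ≤ q)
    (hper : ∀ n : ℕ, K ≤ n → a (n + q) = a n)
    (hbd : ∀ α : ℚ, α ∈ Set.Ioo (0 : ℚ) 1 →
      ∃ M : ℝ, ∀ r : ℝ, 0 ≤ r → r < 1 →
        ‖∑' n : ℕ, a n * (r : ℂ) ^ n * e (n * (α : ℝ))‖ ≤ M) :
    ∀ j j' : ℕ, j ≤ q - 1 → j' ≤ q - 1 → a (K + j) = a (K + j') := by
  intro j j' hj hj'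
  have hζ := isPrimitiveRoot_e_inv (q := q) (by omega)
  refine hζ.eq_of_sum_mul_pow_eq_zero (c := fun t ↦ a (K + t)) (fun m hm hmq ↦ ?_)
    (by omega) (by omega)
  obtain ⟨M, hM⟩ := hbd (m / q) ⟨by positivity, (div_lt_one (by positivity)).mpr
    (by exact_mod_cast hmq)⟩
  refine sum_range_mul_pow_eq_zero_of_bounded_radial hq hper
    (by rw [pow_right_comm, hζ.pow_eq_one, one_pow]) (M := M) fun r hr0 hr1 ↦ ?_
  convert hM r hr0 hr1 using 4 with n
  push_cast [div_eq_mul_inv, e_natCast_mul, mul_pow, mul_assoc]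
  rfl
end

section
/- Let f : ℕ → ℕ be strictly increasing and α ∈ E(f,a), i.e., the factoradic digits satisfy s_{f(i)+1}(α) ≤ (f(i)+1)/a_i for all i. Then for every n ∈ ℕ, the fractional part {f(n)!·α} ≤ 1/a_n + e/(f(n)+1). -/
/-!
Multiplying α = ∑ s_j / j! by m! = f(n)! turns the terms with j ≤ m into integers, so the
fractional part of m!·α is at most m! times the tail ∑_{j > m} s_j / j!. The first tail term is
s_{m+1} / (m+1) ≤ 1 / a_n, and since s_j ≤ j every later term m! s_{m+i+2} / (m+i+2)! is at most
m! / (m+i+1)! ≤ 1 / ((m+1) i!), which sums to e / (m+1).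
-/

open Finset Nat Real

lemma Real.hasSum_inv_factorial : HasSum (fun n : ℕ => 1 / (n ! : ℝ)) (exp 1) := by
  simpa [Real.exp_eq_exp_ℝ] using NormedSpace.expSeries_div_hasSum_exp (1 : ℝ)

lemma Int.fract_le_self_of_nonneg {R : Type*} [Ring R] [LinearOrder R] [IsStrictOrderedRing R]
    [FloorRing R] {a : R} (ha : 0 ≤ a) : Int.fract a ≤ a :=
  sub_le_self a (Int.cast_nonneg (Int.floor_nonneg.mpr ha))

lemma div_factorial_succ_le_inv_factorial {d j : ℕ} (hd : d ≤ j + 1) :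
    (d : ℝ) / (j + 1)! ≤ 1 / j ! := by
  rw [factorial_succ, Nat.cast_mul, ← div_div, div_le_div_iff_of_pos_right (by positivity)]
  exact div_le_one_of_le₀ (mod_cast hd) (by positivity)

lemma factorial_div_factorial_add_succ_le (m i : ℕ) :
    (m ! : ℝ) / (i + m + 1)! ≤ 1 / i ! / (m + 1) := by
  have hdvd : (m + 1)! * i ! ≤ (i + m + 1)! := by
    rw [show i + m + 1 = m + 1 + i by omega]
    exact Nat.le_of_dvd (factorial_pos _) (factorial_mul_factorial_dvd_factorial_add _ _)
  have hle : ((m + 1 : ℝ) * m !) * i ! ≤ (i + m + 1)! := by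
    rw [← Nat.cast_succ, ← Nat.cast_mul, ← factorial_succ]; exact_mod_cast hdvd
  rw [div_div, div_le_div_iff₀ (by positivity) (by positivity)]
  linarith

lemma exists_natCast_eq_factorial_mul_sum_range (s : ℕ → ℕ) (m : ℕ) :
    ∃ N : ℕ, (m ! : ℝ) * ∑ i ∈ range m, (s (i + 1) : ℝ) / (i + 1)! = N := by
  refine ⟨∑ i ∈ range m, m ! / (i + 1)! * s (i + 1), ?_⟩
  rw [mul_sum, Nat.cast_sum]
  refine sum_congr rfl fun i hi => ?_
  have hdvd := factorial_dvd_factorial (mem_range.mp hi)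
  rw [Nat.cast_mul, Nat.cast_div hdvd (by positivity)]
  field_simp

lemma summable_digit_div_factorial {s : ℕ → ℕ} (hs : ∀ j, s (j + 1) ≤ j + 1) :
    Summable fun n => (s (n + 1) : ℝ) / (n + 1)! :=
  Real.hasSum_inv_factorial.summable.of_nonneg_of_le (fun _ => by positivity)
    fun n => div_factorial_succ_le_inv_factorial (hs n)

lemma fract_factorial_mul_tsum_le_tail {s : ℕ → ℕ} (hs : ∀ j, s (j + 1) ≤ j + 1) (m : ℕ) :
    Int.fract ((m ! : ℝ) * ∑' n, (s (n + 1) : ℝ) / (n + 1)!) ≤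
      m ! * ∑' i, (s (i + m + 1) : ℝ) / (i + m + 1)! := by
  obtain ⟨N, hN⟩ := exists_natCast_eq_factorial_mul_sum_range s m
  rw [← (summable_digit_div_factorial hs).sum_add_tsum_nat_add m, mul_add, hN,
    Int.fract_natCast_add]
  exact Int.fract_le_self_of_nonneg (by positivity)

lemma factorial_mul_tsum_tail_le {s : ℕ → ℕ} (hs : ∀ j, s (j + 1) ≤ j + 1) (m : ℕ) :
    (m ! : ℝ) * ∑' i, (s (i + m + 1) : ℝ) / (i + m + 1)! ≤ (s (m + 1) + exp 1) / (m + 1) := by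
  have hsum := (summable_nat_add_iff m).mpr (summable_digit_div_factorial hs)
  rw [hsum.tsum_eq_zero_add, mul_add, add_div]
  refine add_le_add ?_ ?_
  · rw [zero_add, factorial_succ, Nat.cast_mul, Nat.cast_succ, mul_div_assoc', mul_comm _ (m ! : ℝ),
      mul_div_mul_left _ _ (by positivity)]
  · have hterm (i : ℕ) :
        (m ! : ℝ) * ((s (i + 1 + m + 1) : ℝ) / (i + 1 + m + 1)!) ≤ 1 / i ! / (m + 1) :=
      calc (m ! : ℝ) * ((s (i + 1 + m + 1) : ℝ) / (i + 1 + m + 1)!)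
          ≤ m ! * (1 / (i + m + 1)!) := by
            rw [show i + 1 + m = i + m + 1 by omega]
            exact mul_le_mul_of_nonneg_left (div_factorial_succ_le_inv_factorial (hs _))
              (by positivity)
        _ ≤ 1 / i ! / (m + 1) := by
            rw [mul_one_div]; exact factorial_div_factorial_add_succ_le m i
    rw [← tsum_mul_left]
    exact hasSum_le hterm (((summable_nat_add_iff 1).mpr hsum).mul_left _).hasSum
      (Real.hasSum_inv_factorial.div_const _)

lemma fract_factorial_mul_tsum_le {s : ℕ → ℕ} (hs : ∀ j, s (j + 1) ≤ j + 1) (m : ℕ) :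
    Int.fract ((m ! : ℝ) * ∑' n, (s (n + 1) : ℝ) / (n + 1)!) ≤ (s (m + 1) + exp 1) / (m + 1) :=
  (fract_factorial_mul_tsum_le_tail hs m).trans (factorial_mul_tsum_tail_le hs m)

theorem stmt_16_general (f : ℕ → ℕ) (a : ℕ → ℕ) (α : ℝ)
    (s : ℕ → ℕ) (hdig : ∀ i : ℕ, 1 ≤ i → s i ≤ i - 1)
    (hrep : α = ∑' n : ℕ, (s (n + 1) : ℝ) / (Nat.factorial (n + 1)))
    (hE : ∀ i : ℕ, 1 ≤ i → (s (f i + 1) : ℝ) ≤ ((f i : ℝ) + 1) / (a i)) :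
    ∀ n : ℕ, 1 ≤ n →
      Int.fract ((Nat.factorial (f n) : ℝ) * α) ≤
        1 / (a n) + Real.exp 1 / ((f n : ℝ) + 1) := by
  intro n hn
  have hs : ∀ j, s (j + 1) ≤ j + 1 := fun j => (hdig (j + 1) j.succ_pos).trans (by omega)
  have hdigit : (s (f n + 1) : ℝ) / (f n + 1) ≤ 1 / a n := by
    have := div_le_div_of_nonneg_right (hE n hn) (by positivity : (0 : ℝ) ≤ f n + 1)
    rwa [div_right_comm, div_self (by positivity)] at this
  calc Int.fract ((f n)! * α) ≤ (s (f n + 1) + exp 1) / (f n + 1) :=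
        hrep ▸ fract_factorial_mul_tsum_le hs (f n)
    _ ≤ 1 / a n + exp 1 / (f n + 1) := by rw [add_div]; gcongr

theorem stmt_16 (f : ℕ → ℕ) (hf : StrictMono f)
    (a : ℕ → ℕ) (ha : ∀ n, 0 < a n)
    (α : ℝ) (hα : α ∈ Set.Ico (0 : ℝ) 1)
    (s : ℕ → ℕ) (hdig : ∀ i : ℕ, 1 ≤ i → s i ≤ i - 1)
    (hrep : α = ∑' n : ℕ, (s (n + 1) : ℝ) / (Nat.factorial (n + 1)))
    (hE : ∀ i : ℕ, 1 ≤ i → (s (f i + 1) : ℝ) ≤ ((f i : ℝ) + 1) / (a i)) :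
    ∀ n : ℕ, 1 ≤ n →
      Int.fract ((Nat.factorial (f n) : ℝ) * α) ≤
        1 / (a n) + Real.exp 1 / ((f n : ℝ) + 1) :=
  stmt_16_general f a α s hdig hrep hE
end

section
/- The indicator function of A = {n + n! : n ∈ ℕ}, viewed as a point χ_A ∈ {0,1}^ℤ (extended by 0 to nonpositive integers), has shift-orbit closure equal to {0, σⁿ(χ_A), σⁿ(χ_{{0}}) : n ∈ ℤ} in the product topology, where σ is the shift map and 0 is the all-zeros sequence. -/
/-!
A limit `y` of shifts `σ^{n_j} χ_S` is the indicator of the set of coordinates `k` with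
`k + n_j ∈ S` eventually. If some `m` occurs infinitely often among the `n_j`, then `y = σ^m χ_S`.
Otherwise `n_j` leaves every finite set, and if each nonzero difference `d` is realised by only
finitely many pairs `a, a + d` of elements of `S`, two distinct coordinates can never both lie
eventually in `S - n_j`; so `y` has at most one nonzero coordinate. Conversely `σ^n χ_S → 0`
as `n → -∞` because `S` is bounded below, and recentring `χ_S` at the elements of `S` gives
every `σ^m χ_{0}`.
For `S = {n + n!}` the differences are finitely represented because `a < b` in `S` forces
`a ≤ 2 (b - a)`.
-/

/-- The indicator of A = {n + n! : n ∈ ℕ, n ≥ 1} as a point of the product space ℤ → ℝ. -/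
noncomputable def chiA : ℤ → ℝ :=
  Set.indicator {k : ℤ | ∃ n : ℕ, 1 ≤ n ∧ k = (n : ℤ) + (Nat.factorial n : ℤ)} 1

/-- The indicator of {0} ⊂ ℤ. -/
noncomputable def chi0 : ℤ → ℝ := Set.indicator {(0 : ℤ)} 1

/-- The shift by n ∈ ℤ. -/
def shift (n : ℤ) (x : ℤ → ℝ) : ℤ → ℝ := fun k => x (k + n)

open Filter Topology Set

def FinitelyRepresentsDifferences (S : Set ℤ) : Prop :=
  ∀ d : ℤ, d ≠ 0 → {a ∈ S | a + d ∈ S}.Finite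

theorem eq_shift_of_tendsto_of_frequently_eq {ι : Type*} {l : Filter ι} {n : ι → ℤ}
    {x y : ℤ → ℝ} {m : ℤ} (h : Tendsto (fun j => shift (n j) x) l (𝓝 y))
    (hm : ∃ᶠ j in l, n j = m) : y = shift m x :=
  tendsto_nhds_unique_of_frequently_eq h tendsto_const_nhds (hm.mono fun j hj => by rw [hj])

theorem indicator_singleton_eq_shift_chi0 (k : ℤ) :
    ({k} : Set ℤ).indicator 1 = shift (-k) chi0 := by
  funext j
  simp only [shift, chi0, indicator_apply, mem_singleton_iff, add_neg_eq_zero, Pi.one_apply]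

section Orbit

variable {S : Set ℤ}

theorem eq_indicator_of_tendsto_shift {ι : Type*} {l : Filter ι} [l.NeBot] {n : ι → ℤ}
    {y : ℤ → ℝ} (h : Tendsto (fun j => shift (n j) (S.indicator 1)) l (𝓝 y)) :
    y = {k | ∀ᶠ j in l, k + n j ∈ S}.indicator 1 := by
  funext k
  have hk : Tendsto (fun j => S.indicator 1 (k + n j)) l (𝓝 (y k)) := tendsto_pi_nhds.1 h k
  by_cases hT : k ∈ {k | ∀ᶠ j in l, k + n j ∈ S}
  · rw [indicator_of_mem hT]
    exact tendsto_nhds_unique hk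
      (tendsto_const_nhds.congr' (hT.mono fun j hj => (indicator_of_mem hj 1).symm))
  · rw [indicator_of_notMem hT]
    exact tendsto_nhds_unique_of_frequently_eq hk tendsto_const_nhds
      ((not_eventually.1 hT).mono fun j hj => indicator_of_notMem hj 1)

theorem subsingleton_eventually_mem_of_tendsto_cofinite (hS : FinitelyRepresentsDifferences S)
    {ι : Type*} {l : Filter ι} [l.NeBot] {n : ι → ℤ} (hn : Tendsto n l cofinite) :
    {k | ∀ᶠ j in l, k + n j ∈ S}.Subsingleton := by
  intro k₁ hk₁ k₂ hk₂
  by_contra hne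
  have hF : ((k₁ + ·) ⁻¹' {a ∈ S | a + (k₂ - k₁) ∈ S}).Finite :=
    (hS _ (sub_ne_zero.2 (Ne.symm hne))).preimage (add_right_injective k₁).injOn
  have hmem : ∀ᶠ j in l, n j ∈ (k₁ + ·) ⁻¹' {a ∈ S | a + (k₂ - k₁) ∈ S} :=
    (hk₁.and hk₂).mono fun j ⟨h₁, h₂⟩ =>
      ⟨h₁, by rwa [show k₁ + n j + (k₂ - k₁) = k₂ + n j by ring]⟩
  obtain ⟨j, hj, hj'⟩ := (hmem.and (hn.eventually hF.eventually_cofinite_notMem)).exists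
  exact hj' hj

theorem closure_orbit_subset (hS : FinitelyRepresentsDifferences S) :
    closure {y : ℤ → ℝ | ∃ n : ℤ, y = shift n (S.indicator 1)} ⊆
      {0} ∪ {y : ℤ → ℝ | ∃ n : ℤ, y = shift n (S.indicator 1)} ∪
        {y : ℤ → ℝ | ∃ n : ℤ, y = shift n chi0} := by
  intro y hy
  obtain ⟨x, hxS, hx⟩ := mem_closure_iff_seq_limit.1 hy
  choose n hn using hxS
  rw [show x = fun j => shift (n j) (S.indicator 1) from funext hn] at hx
  by_cases hfreq : ∃ m, ∃ᶠ j in atTop, n j = m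
  · obtain ⟨m, hm⟩ := hfreq
    exact Or.inl (Or.inr ⟨m, eq_shift_of_tendsto_of_frequently_eq hx hm⟩)
  push Not at hfreq
  have hn_cof : Tendsto n atTop cofinite := le_cofinite_iff_eventually_ne.2 hfreq
  rw [eq_indicator_of_tendsto_shift hx]
  rcases (subsingleton_eventually_mem_of_tendsto_cofinite hS hn_cof).eq_empty_or_singleton
    with hT | ⟨k, hT⟩
  · exact Or.inl (Or.inl (by rw [hT, indicator_empty]; rfl))
  · exact Or.inr ⟨-k, by rw [hT, indicator_singleton_eq_shift_chi0]⟩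

theorem zero_mem_closure_orbit (hS : BddBelow S) :
    (0 : ℤ → ℝ) ∈ closure {y : ℤ → ℝ | ∃ n : ℤ, y = shift n (S.indicator 1)} := by
  obtain ⟨b, hb⟩ := hS
  refine mem_closure_of_tendsto (b := atBot) (f := fun n : ℤ => shift n (S.indicator 1))
    (tendsto_pi_nhds.2 fun k => tendsto_const_nhds.congr' ?_)
    (Eventually.of_forall fun n => ⟨n, rfl⟩)
  filter_upwards [eventually_lt_atBot (b - k)] with n hn
  exact (indicator_of_notMem (fun hmem => by linarith [hb hmem]) 1).symm

theorem shift_chi0_mem_closure_orbit (hS : FinitelyRepresentsDifferences S) (hinf : S.Infinite)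
    (m : ℤ) : shift m chi0 ∈ closure {y : ℤ → ℝ | ∃ n : ℤ, y = shift n (S.indicator 1)} := by
  have : Infinite S := hinf.to_subtype
  refine mem_closure_of_tendsto (b := cofinite) (f := fun a : S => shift (m + a) (S.indicator 1))
    (tendsto_pi_nhds.2 fun k => tendsto_const_nhds.congr' ?_)
    (Eventually.of_forall fun a => ⟨_, rfl⟩)
  by_cases hk : k + m = 0
  · refine Eventually.of_forall fun a => ?_
    simp only [shift, chi0, hk, show k + (m + a) = a by linarith, indicator_of_mem a.2,
      indicator_of_mem (mem_singleton (0 : ℤ)), Pi.one_apply]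
  · have hF : {a : S | (a : ℤ) + (k + m) ∈ S}.Finite :=
      ((hS _ hk).preimage Subtype.val_injective.injOn).subset fun a ha => ⟨a.2, ha⟩
    filter_upwards [hF.eventually_cofinite_notMem] with a ha
    have ha' : k + (m + a) ∉ S := by rwa [show k + (m + a) = a + (k + m) by ring]
    simp only [shift, chi0, indicator_of_notMem ha',
      indicator_of_notMem (mt mem_singleton_iff.1 hk)]

theorem closure_orbit_indicator (hS : FinitelyRepresentsDifferences S) (hbdd : BddBelow S)
    (hinf : S.Infinite) :
    closure {y : ℤ → ℝ | ∃ n : ℤ, y = shift n (S.indicator 1)} =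
      {0} ∪ {y : ℤ → ℝ | ∃ n : ℤ, y = shift n (S.indicator 1)} ∪
        {y : ℤ → ℝ | ∃ n : ℤ, y = shift n chi0} := by
  refine (closure_orbit_subset hS).antisymm ?_
  rintro y ((rfl | hy) | ⟨m, rfl⟩)
  · exact zero_mem_closure_orbit hbdd
  · exact subset_closure hy
  · exact shift_chi0_mem_closure_orbit hS hinf m

end Orbit

def addFactorialSet : Set ℤ := {k : ℤ | ∃ n : ℕ, 1 ≤ n ∧ k = (n : ℤ) + (Nat.factorial n : ℤ)}

theorem two_le_of_mem_addFactorialSet {k : ℤ} (hk : k ∈ addFactorialSet) : 2 ≤ k := by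
  obtain ⟨n, hn, rfl⟩ := hk
  have := n.factorial_pos
  omega

theorem le_two_mul_sub_of_mem_addFactorialSet {a b : ℤ} (ha : a ∈ addFactorialSet)
    (hb : b ∈ addFactorialSet) (hab : a < b) : a ≤ 2 * (b - a) := by
  obtain ⟨m, hm, rfl⟩ := ha
  obtain ⟨m', -, rfl⟩ := hb
  have hmm' : m < m' := by
    by_contra! h
    have := Nat.factorial_le h
    omega
  -- `b - a ≥ (m + 1)! - m! = m * m!`, which already dominates `m + m!` up to a factor `2`.
  have hfac : ((m + 1) * m.factorial : ℤ) ≤ m'.factorial := by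
    exact_mod_cast Nat.factorial_le hmm'
  have hpos : (1 : ℤ) ≤ m.factorial := by exact_mod_cast m.factorial_pos
  have hm1 : (1 : ℤ) ≤ m := by exact_mod_cast hm
  nlinarith

theorem finitelyRepresentsDifferences_addFactorialSet :
    FinitelyRepresentsDifferences addFactorialSet := by
  intro d hd
  refine (finite_Icc 2 (3 * |d|)).subset fun a ⟨ha, had⟩ =>
    ⟨two_le_of_mem_addFactorialSet ha, ?_⟩
  rcases hd.lt_or_gt with hneg | hpos
  · have := le_two_mul_sub_of_mem_addFactorialSet had ha (by linarith)
    rw [abs_of_neg hneg]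
    linarith
  · have := le_two_mul_sub_of_mem_addFactorialSet ha had (by linarith)
    rw [abs_of_pos hpos]
    linarith

theorem infinite_addFactorialSet : addFactorialSet.Infinite := by
  refine infinite_of_not_bddAbove fun ⟨B, hB⟩ => ?_
  have h := hB ⟨B.toNat + 1, le_add_self, rfl⟩
  have := (B.toNat + 1).factorial_pos
  omega

theorem stmt_19 :
    closure {y : ℤ → ℝ | ∃ n : ℤ, y = shift n chiA} =
      {0} ∪ {y : ℤ → ℝ | ∃ n : ℤ, y = shift n chiA} ∪
        {y : ℤ → ℝ | ∃ n : ℤ, y = shift n chi0} :=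
  closure_orbit_indicator finitelyRepresentsDifferences_addFactorialSet
    ⟨2, fun _ hk => two_le_of_mem_addFactorialSet hk⟩ infinite_addFactorialSet
end
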